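/- Suppose firm Y draws its threshold from a continuous cdf F on [0,1] with Λ(θ) = ∫₀^θ F(t) dt and failure probability q = E[Θ] = 1 - Λ(1). If firm X chooses a deterministic threshold θ, its probability of being selected equals (1-θ)·q + ((1-θ)² + θ²)·F(θ) + (1 - 2θ)·Λ(θ). -/

import Mathlib

/-!
Conditioning on Y's threshold `t`, the two qualities give `win θ t = 1 - θ + θ t` for `t < θ`
and `win θ t = (1 - θ) t` for `t > θ`; continuity of `F` makes the tie `t = θ` null. Integrating
against `ν`, the only non-trivial ingredient is the truncated first moment
`∫_{t ≤ u} t dν = u F(u) - ∫₀ᵘ F`, which is the layer-cake formula for `ν` restricted to `(-∞, u]`.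
-/

open MeasureTheory Set

/-- Outcome of the selection rule for firm `X` with threshold `θ` and quality `x`
against firm `Y` with threshold `t` and quality `y`: `1` if `X` is selected, `0` if
`Y` is selected, `1/2` on an exact coin-flip tie. A firm passes iff its quality is at
least its threshold; a passing firm beats a failing firm; on equal outcomes the firm
with the higher threshold wins; exact threshold ties are broken by fair coin. -/
noncomputable def sel (θ x t y : ℝ) : ℝ :=
  if θ ≤ x ∧ y < t then 1
  else if x < θ ∧ t ≤ y then 0
  else if t < θ then 1
  else if θ < t then 0
  else 1/2

/-- Probability that a firm with deterministic threshold `θ` is selected against a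
firm with threshold `t`, over i.i.d. uniform `[0,1]` qualities. -/
noncomputable def win (θ t : ℝ) : ℝ := ∫ x in (0:ℝ)..1, ∫ y in (0:ℝ)..1, sel θ x t y

lemma intervalIntegral_zero_one_ite_lt {c : ℝ} (hc : c ∈ Icc (0:ℝ) 1) (a b : ℝ) :
    ∫ y in (0:ℝ)..1, (if y < c then a else b) = c * a + (1 - c) * b := by
  have hsplit (y : ℝ) : (if y < c then a else b) = (Iio c).indicator (fun _ => a - b) y + b := by
    by_cases h : y < c <;> simp [h]
  have hint : IntervalIntegrable ((Iio c).indicator fun _ => a - b) volume 0 1 :=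
    intervalIntegrable_iff.2 <|
      (integrableOn_const measure_Ioc_lt_top.ne).indicator measurableSet_Iio
  have hinter : Iio c ∩ Ioc 0 1 = Ioo 0 c := by
    ext y; simp only [mem_inter_iff, mem_Iio, mem_Ioc, mem_Ioo]; grind
  simp_rw [hsplit]
  rw [intervalIntegral.integral_add hint intervalIntegrable_const,
    intervalIntegral.integral_of_le zero_le_one, integral_indicator_const _ measurableSet_Iio,
    measureReal_restrict_apply measurableSet_Iio, hinter]
  simp [hc.1]
  ring

lemma sel_of_lt {θ t : ℝ} (h : t < θ) (x y : ℝ) :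
    sel θ x t y = if x < θ then (if y < t then 1 else 0) else 1 := by
  grind [sel]

lemma sel_of_gt {θ t : ℝ} (h : θ < t) (x y : ℝ) :
    sel θ x t y = if x < θ then 0 else (if y < t then 1 else 0) := by
  grind [sel]

lemma win_of_lt {θ t : ℝ} (hθ : θ ∈ Icc (0:ℝ) 1) (ht : t ∈ Icc (0:ℝ) 1) (h : t < θ) :
    win θ t = 1 - θ + θ * t := by
  have inner (x : ℝ) : ∫ y in (0:ℝ)..1, sel θ x t y = if x < θ then t else 1 := by
    simp only [sel_of_lt h]
    split_ifs
    · simpa using intervalIntegral_zero_one_ite_lt ht 1 0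
    · simp
  simp only [win, inner]
  rw [intervalIntegral_zero_one_ite_lt hθ]
  ring

lemma win_of_gt {θ t : ℝ} (hθ : θ ∈ Icc (0:ℝ) 1) (ht : t ∈ Icc (0:ℝ) 1) (h : θ < t) :
    win θ t = (1 - θ) * t := by
  have inner (x : ℝ) : ∫ y in (0:ℝ)..1, sel θ x t y = if x < θ then 0 else t := by
    simp only [sel_of_gt h]
    split_ifs
    · simp
    · simpa using intervalIntegral_zero_one_ite_lt ht 1 0
  simp only [win, inner]
  rw [intervalIntegral_zero_one_ite_lt hθ]
  ring

lemma win_ae_eq {ν : Measure ℝ} [NullSingletonClass ν] (hν : ∀ᵐ t ∂ν, t ∈ Icc (0:ℝ) 1)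
    {θ : ℝ} (hθ : θ ∈ Icc (0:ℝ) 1) :
    (fun t => win θ t) =ᵐ[ν]
      fun t => (1 - θ) * t + (Iic θ).indicator (fun t => 1 - θ + (2 * θ - 1) * t) t := by
  filter_upwards [hν, Measure.ae_ne ν θ] with t ht htθ
  rcases htθ.lt_or_gt with h | h
  · rw [win_of_lt hθ ht h, indicator_of_mem (mem_Iic.2 h.le)]
    ring
  · rw [win_of_gt hθ ht h, indicator_of_notMem (notMem_Iic.2 h), add_zero]

lemma integrable_id_of_ae_mem_Icc {ν : Measure ℝ} [IsFiniteMeasure ν] {a b : ℝ}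
    (hν : ∀ᵐ t ∂ν, t ∈ Icc a b) : Integrable (fun t => t) ν :=
  Integrable.of_bound measurable_id.aestronglyMeasurable (max |a| |b|) <|
    hν.mono fun _ ht => abs_le_max_abs_abs ht.1 ht.2

namespace ProbabilityTheory

variable {ν : Measure ℝ} [IsProbabilityMeasure ν]

lemma nullSingletonClass_of_continuous_cdf (h : Continuous (cdf ν)) : NullSingletonClass ν where
  measure_singleton c := by
    simpa [measure_cdf, h.continuousWithinAt.leftLim_eq] using (cdf ν).measure_singleton c

lemma measureReal_Ioc_eq_cdf_sub {s u : ℝ} (h : s ≤ u) : ν.real (Ioc s u) = cdf ν u - cdf ν s := by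
  have hIoc := (cdf ν).measure_Ioc s u
  rw [measure_cdf] at hIoc
  rw [measureReal_def, hIoc, ENNReal.toReal_ofReal (sub_nonneg.2 (monotone_cdf ν h))]

lemma setIntegral_Iic_eq_mul_cdf_sub_integral_cdf (h0 : ∀ᵐ t ∂ν, 0 ≤ t) {u : ℝ} (hu : 0 ≤ u) :
    ∫ t in Iic u, t ∂ν = u * cdf ν u - ∫ s in (0:ℝ)..u, cdf ν s := by
  have hnn : 0 ≤ᵐ[ν.restrict (Iic u)] fun t => t := ae_restrict_of_ae h0
  have hint : Integrable (fun t => t) (ν.restrict (Iic u)) := by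
    refine Integrable.of_bound measurable_id.aestronglyMeasurable u ?_
    filter_upwards [hnn, ae_restrict_mem measurableSet_Iic] with t ht htu
    rwa [Real.norm_of_nonneg ht]
  have hlayer (s : ℝ) : (ν.restrict (Iic u)).real {t | s < t}
      = (Iic u).indicator (fun s => cdf ν u - cdf ν s) s := by
    change (ν.restrict (Iic u)).real (Ioi s) = _
    rw [measureReal_restrict_apply measurableSet_Ioi, Ioi_inter_Iic]
    by_cases hs : s ∈ Iic u
    · rw [indicator_of_mem hs, measureReal_Ioc_eq_cdf_sub hs]
    · rw [indicator_of_notMem hs, Ioc_eq_empty_of_le (not_le.1 hs).le, measureReal_empty]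
  rw [hint.integral_eq_integral_meas_lt hnn]
  simp_rw [hlayer]
  rw [setIntegral_indicator measurableSet_Iic, Ioi_inter_Iic, ← intervalIntegral.integral_of_le hu,
    intervalIntegral.integral_sub intervalIntegrable_const (monotone_cdf ν).intervalIntegrable]
  simp

lemma integral_id_eq_one_sub_integral_cdf (h : ∀ᵐ t ∂ν, t ∈ Icc (0:ℝ) 1) :
    ∫ t, t ∂ν = 1 - ∫ s in (0:ℝ)..1, cdf ν s := by
  have hres : ν.restrict (Iic 1) = ν := Measure.restrict_eq_self_of_ae_mem (h.mono fun _ ht => ht.2)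
  have hcdf : cdf ν 1 = 1 := by
    rw [cdf_eq_real, ← measureReal_restrict_apply_univ, hres, probReal_univ]
  calc ∫ t, t ∂ν = ∫ t in Iic 1, t ∂ν := by rw [hres]
    _ = 1 - ∫ s in (0:ℝ)..1, cdf ν s := by
      rw [setIntegral_Iic_eq_mul_cdf_sub_integral_cdf (h.mono fun _ ht => ht.1) zero_le_one, hcdf,
        one_mul]

end ProbabilityTheory

open ProbabilityTheory

/-- If firm `Y` draws its threshold from a continuous cdf `F` on `[0,1]` with
`Λ(θ) = ∫₀^θ F` and failure probability `q = 1 - Λ(1)`, then firm `X` choosing the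
deterministic threshold `θ ∈ [0,1]` is selected with probability
`(1-θ)·q + ((1-θ)² + θ²)·F(θ) + (1-2θ)·Λ(θ)`. -/
theorem stmt_14 (ν : Measure ℝ) [IsProbabilityMeasure ν] (hsupp : ν (Icc (0:ℝ) 1) = 1)
    (F : ℝ → ℝ) (hF : ∀ x, F x = (ν (Iic x)).toReal) (hcont : Continuous F)
    (θ : ℝ) (hθ : θ ∈ Icc (0:ℝ) 1) :
    (∫ t, win θ t ∂ν)
      = (1 - θ) * (1 - ∫ t in (0:ℝ)..1, F t)
        + ((1-θ)^2 + θ^2) * F θ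
        + (1 - 2*θ) * (∫ t in (0:ℝ)..θ, F t) := by
  obtain rfl : F = cdf ν := funext fun x => by rw [hF, cdf_eq_real, measureReal_def]
  have := nullSingletonClass_of_continuous_cdf hcont
  have hν : ∀ᵐ t ∂ν, t ∈ Icc (0:ℝ) 1 :=
    (ae_mem_iff_measure_eq measurableSet_Icc.nullMeasurableSet).2 (by rw [hsupp, measure_univ])
  have hid := integrable_id_of_ae_mem_Icc hν
  have hlin : Integrable (fun t => 1 - θ + (2 * θ - 1) * t) ν :=
    (integrable_const _).add (hid.const_mul _)
  rw [integral_congr_ae (win_ae_eq hν hθ),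
    integral_add (hid.const_mul _) (hlin.indicator measurableSet_Iic),
    integral_const_mul, integral_indicator measurableSet_Iic,
    integral_add (integrable_const _) (hid.restrict.const_mul _), setIntegral_const,
    integral_const_mul, smul_eq_mul, integral_id_eq_one_sub_integral_cdf hν,
    setIntegral_Iic_eq_mul_cdf_sub_integral_cdf (hν.mono fun _ ht => ht.1) hθ.1, ← cdf_eq_real]
  ring
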